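/- Let Q be a dyadic Carleson square and let {Q_j} be a finite or countable collection of pairwise disjoint dyadic Carleson squares contained in Q satisfying Σ_j ℓ(Q_j) ≤ (1/2)·ℓ(Q). Let R = Q ∖ ⋃_j closure(Q_j). Then the one-dimensional Hausdorff (arclength) measure of ∂R ∩ 𝔻 is at most 17·ℓ(Q). -/

import Mathlib

/-!
A dyadic square of side `ℓ` is an open annular sector whose boundary inside `𝔻` consists of two
radial segments of length `ℓ` and an arc of length at most `2πℓ`. Since `∑ ℓ(Q_j) < ∞`, only
finitely many `Q_j` come within distance `ε` of the circle `|z| = 1 - 2ε`, so near each point of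
`𝔻` the union of the closures `closure Q_j` is a finite union and `∂R ∩ 𝔻 ⊆ ∂Q ∪ ⋃ ∂Q_j`.
Hence the length of `∂R ∩ 𝔻` is at most `(2 + 2π)(ℓ + ℓ/2) ≤ 17ℓ`.
-/

open Complex Metric Set MeasureTheory

/-- The open unit disk in the complex plane. -/
def unitDisk : Set ℂ := Metric.ball 0 1

/-- The dyadic Carleson square `Q_{n,j}`, for `n ≥ 1` and `0 ≤ j < 2^n`. -/
noncomputable def dyadicSquare (n j : ℕ) : Set ℂ :=
  {z | ∃ r θ : ℝ, 1 - (2:ℝ) ^ (-(n:ℤ)) < r ∧ r < 1 ∧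
    2 * Real.pi * j * (2:ℝ) ^ (-(n:ℤ)) < θ ∧ θ < 2 * Real.pi * (j + 1) * (2:ℝ) ^ (-(n:ℤ)) ∧
    z = r * Complex.exp (θ * Complex.I)}

open scoped ENNReal Topology

theorem frontier_diff_subset {X : Type*} [TopologicalSpace X] (s t : Set X) :
    frontier (s \ t) ⊆ frontier s ∪ frontier t := by
  rw [sdiff_eq, ← frontier_compl t]
  exact (frontier_inter_subset _ _).trans
    (union_subset_union inter_subset_left inter_subset_right)

theorem exists_mem_frontier_of_mem_frontier_biUnion {ι X : Type*} [TopologicalSpace X]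
    {s : ι → Set X} {S : Set ι} {t : Set X} {z : X} (ht : t ∈ 𝓝 z)
    (hfin : {i ∈ S | (s i ∩ t).Nonempty}.Finite) (hz : z ∈ frontier (⋃ i ∈ S, s i)) :
    ∃ i ∈ S, z ∈ frontier (s i) := by
  have hcl : z ∈ closure (⋃ i ∈ {i ∈ S | (s i ∩ t).Nonempty}, s i) := by
    refine mem_closure_iff_nhds.2 fun u hu => ?_
    obtain ⟨w, ⟨hwu, hwt⟩, hw⟩ := mem_closure_iff_nhds.1 hz.1 (u ∩ t) (Filter.inter_mem hu ht)
    obtain ⟨i, hi, hwi⟩ := mem_iUnion₂.1 hw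
    exact ⟨w, hwu, mem_iUnion₂.2 ⟨i, ⟨hi, w, hwi, hwt⟩, hwi⟩⟩
  rw [hfin.closure_biUnion] at hcl
  obtain ⟨i, hi, hzi⟩ := mem_iUnion₂.1 hcl
  exact ⟨i, hi.1, hzi, fun h => hz.2 (interior_mono (subset_biUnion_of_mem hi.1) h)⟩

theorem hausdorffMeasure_radialSegment_le (θ r₁ r₂ : ℝ) :
    μH[1] ((fun r : ℝ => (r : ℂ) * exp (θ * I)) '' Icc r₁ r₂) ≤ ENNReal.ofReal (r₂ - r₁) := by
  have hlip : LipschitzWith 1 fun r : ℝ => (r : ℂ) * exp (θ * I) :=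
    LipschitzWith.of_dist_le_mul fun x y => by
      rw [dist_eq, ← sub_mul, ← ofReal_sub, norm_mul, norm_exp_ofReal_mul_I, norm_real]
      simp [Real.dist_eq]
  refine (hlip.hausdorffMeasure_image_le zero_le_one _).trans ?_
  simp [hausdorffMeasure_real]

theorem hausdorffMeasure_circleMap_image_Icc_le (R a b : ℝ) :
    μH[1] (circleMap 0 R '' Icc a b) ≤ ENNReal.ofReal (|R| * (b - a)) := by
  refine ((lipschitzWith_circleMap 0 R).hausdorffMeasure_image_le zero_le_one _).trans ?_
  rw [hausdorffMeasure_real, Real.volume_Icc, ENNReal.rpow_one, ← Real.toNNReal_abs,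
    ENNReal.ofReal_mul (abs_nonneg R)]
  rfl

def annularSector (r₁ r₂ a b : ℝ) : Set ℂ :=
  {z | ∃ r θ : ℝ, r₁ < r ∧ r < r₂ ∧ a < θ ∧ θ < b ∧ z = r * exp (θ * I)}

section AnnularSector

variable {r₁ r₂ a b : ℝ}

theorem annularSector_eq_exp_image (h₁ : 0 ≤ r₁) : annularSector r₁ r₂ a b =
    exp '' {w | r₁ < Real.exp w.re ∧ Real.exp w.re < r₂ ∧ a < w.im ∧ w.im < b} := by
  ext z
  constructor
  · rintro ⟨r, θ, hr₁, hr₂, ha, hb, rfl⟩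
    have hr : 0 < r := h₁.trans_lt hr₁
    refine ⟨Real.log r + θ * I, ?_, ?_⟩
    · simp [Real.exp_log hr, *]
    · rw [exp_add, ← ofReal_exp, Real.exp_log hr]
  · rintro ⟨w, ⟨hr₁, hr₂, ha, hb⟩, rfl⟩
    refine ⟨Real.exp w.re, w.im, hr₁, hr₂, ha, hb, ?_⟩
    rw [ofReal_exp, ← exp_add, re_add_im]

theorem isOpen_annularSector (h₁ : 0 ≤ r₁) : IsOpen (annularSector r₁ r₂ a b) := by
  rw [annularSector_eq_exp_image h₁]
  refine isOpenMap_exp _ ?_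
  have hc : Continuous fun w : ℂ => Real.exp w.re := by fun_prop
  simp only [ofPred_and]
  exact (isOpen_lt continuous_const hc).inter <| (isOpen_lt hc continuous_const).inter <|
    (isOpen_lt continuous_const continuous_im).inter (isOpen_lt continuous_im continuous_const)

theorem closure_annularSector_subset :
    closure (annularSector r₁ r₂ a b) ⊆
      (fun p : ℝ × ℝ => (p.1 : ℂ) * exp (p.2 * I)) '' (Icc r₁ r₂ ×ˢ Icc a b) := by
  refine closure_minimal ?_ ((isCompact_Icc.prod isCompact_Icc).image (by fun_prop)).isClosed
  rintro z ⟨r, θ, hr₁, hr₂, ha, hb, rfl⟩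
  exact ⟨(r, θ), ⟨⟨hr₁.le, hr₂.le⟩, ha.le, hb.le⟩, rfl⟩

theorem closure_annularSector_subset_le_norm :
    closure (annularSector r₁ r₂ a b) ⊆ {w | r₁ ≤ ‖w‖} := by
  rintro z hz
  obtain ⟨⟨r, θ⟩, ⟨⟨hr₁, -⟩, -⟩, rfl⟩ := closure_annularSector_subset hz
  simpa using hr₁.trans (le_abs_self r)

theorem frontier_annularSector_inter_ball_subset (h₁ : 0 ≤ r₁) :
    frontier (annularSector r₁ r₂ a b) ∩ ball 0 r₂ ⊆
      (fun r : ℝ => (r : ℂ) * exp (a * I)) '' Icc r₁ r₂ ∪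
        (fun r : ℝ => (r : ℂ) * exp (b * I)) '' Icc r₁ r₂ ∪ circleMap 0 r₁ '' Icc a b := by
  rintro z ⟨hz, hzr⟩
  rw [(isOpen_annularSector h₁).frontier_eq] at hz
  obtain ⟨⟨r, θ⟩, ⟨⟨hr₁, hr₂⟩, ha, hb⟩, rfl⟩ := closure_annularSector_subset hz.1
  have hr : r < r₂ := by simpa [abs_of_nonneg (h₁.trans hr₁)] using hzr
  rcases hr₁.eq_or_lt with rfl | hr₁
  · exact Or.inr ⟨θ, ⟨ha, hb⟩, by simp [circleMap]⟩
  rcases ha.eq_or_lt with rfl | ha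
  · exact Or.inl (Or.inl ⟨r, ⟨hr₁.le, hr₂⟩, rfl⟩)
  rcases hb.eq_or_lt with rfl | hb
  · exact Or.inl (Or.inr ⟨r, ⟨hr₁.le, hr₂⟩, rfl⟩)
  exact absurd ⟨r, θ, hr₁, hr, ha, hb, rfl⟩ hz.2

theorem hausdorffMeasure_frontier_annularSector_inter_ball_le (h₁ : 0 ≤ r₁) (h₁₂ : r₁ ≤ r₂)
    (hab : a ≤ b) :
    μH[1] (frontier (annularSector r₁ r₂ a b) ∩ ball 0 r₂) ≤
      ENNReal.ofReal (2 * (r₂ - r₁) + r₁ * (b - a)) := by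
  calc μH[1] (frontier (annularSector r₁ r₂ a b) ∩ ball 0 r₂)
      ≤ μH[1] ((fun r : ℝ => (r : ℂ) * exp (a * I)) '' Icc r₁ r₂) +
          μH[1] ((fun r : ℝ => (r : ℂ) * exp (b * I)) '' Icc r₁ r₂) +
          μH[1] (circleMap 0 r₁ '' Icc a b) :=
        (measure_mono (frontier_annularSector_inter_ball_subset h₁)).trans <|
          (measure_union_le _ _).trans (add_le_add_left (measure_union_le _ _) _)
    _ ≤ ENNReal.ofReal (r₂ - r₁) + ENNReal.ofReal (r₂ - r₁) +
          ENNReal.ofReal (|r₁| * (b - a)) := by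
        gcongr
        exacts [hausdorffMeasure_radialSegment_le _ _ _, hausdorffMeasure_radialSegment_le _ _ _,
          hausdorffMeasure_circleMap_image_Icc_le _ _ _]
    _ = ENNReal.ofReal (2 * (r₂ - r₁) + r₁ * (b - a)) := by
        rw [abs_of_nonneg h₁, ← ENNReal.ofReal_add (by linarith) (by linarith),
          ← ENNReal.ofReal_add (by linarith) (by nlinarith), two_mul]

end AnnularSector

theorem dyadicSquare_eq_annularSector (n j : ℕ) :
    dyadicSquare n j = annularSector (1 - (2:ℝ) ^ (-(n:ℤ))) 1
      (2 * Real.pi * j * (2:ℝ) ^ (-(n:ℤ))) (2 * Real.pi * (j + 1) * (2:ℝ) ^ (-(n:ℤ))) :=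
  rfl

theorem hausdorffMeasure_frontier_dyadicSquare_inter_unitDisk_le (n j : ℕ) :
    μH[1] (frontier (dyadicSquare n j) ∩ unitDisk) ≤
      ENNReal.ofReal (2 + 2 * Real.pi) * ENNReal.ofReal ((2:ℝ) ^ (-(n:ℤ))) := by
  set ℓ : ℝ := (2:ℝ) ^ (-(n:ℤ))
  have hℓ : 0 < ℓ := by positivity
  have hℓ₁ : ℓ ≤ 1 := zpow_le_one_of_nonpos₀ one_le_two (by simp)
  have hπ := Real.pi_pos
  rw [← ENNReal.ofReal_mul (by positivity), dyadicSquare_eq_annularSector]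
  refine (hausdorffMeasure_frontier_annularSector_inter_ball_le (by linarith) (by linarith)
    (by nlinarith)).trans (ENNReal.ofReal_le_ofReal ?_)
  nlinarith [mul_pos hπ (mul_pos hℓ hℓ)]

theorem frontier_biUnion_closure_dyadicSquare_inter_unitDisk_subset {S : Set (ℕ × ℕ)}
    (hS : ∑' p : S, ENNReal.ofReal ((2:ℝ) ^ (-(p.1.1:ℤ))) ≠ ∞) :
    frontier (⋃ p ∈ S, closure (dyadicSquare p.1 p.2)) ∩ unitDisk ⊆
      ⋃ p ∈ S, frontier (dyadicSquare p.1 p.2) ∩ unitDisk := by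
  rintro z ⟨hz, hzD⟩
  have hε : 0 < 1 - ‖z‖ := sub_pos.2 (mem_ball_zero_iff.1 hzD)
  -- `closure Q_p ⊆ {1 - ℓ(Q_p) ≤ ‖w‖}`, so `Q_p` meets this ball only if `(1 - ‖z‖)/2 ≤ ℓ(Q_p)`
  have hfin :
      {p ∈ S | (closure (dyadicSquare p.1 p.2) ∩ ball z ((1 - ‖z‖) / 2)).Nonempty}.Finite := by
    refine ((ENNReal.finite_const_le_of_tsum_ne_top hS
      (ENNReal.ofReal_pos.2 (half_pos hε)).ne').image Subtype.val).subset ?_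
    rintro p ⟨hp, w, hw, hwz⟩
    have hnorm : 1 - (2:ℝ) ^ (-(p.1:ℤ)) ≤ ‖w‖ := closure_annularSector_subset_le_norm hw
    have hdist := norm_sub_norm_le w z
    rw [mem_ball, dist_eq_norm] at hwz
    exact ⟨⟨p, hp⟩, ENNReal.ofReal_le_ofReal (by linarith), rfl⟩
  obtain ⟨p, hp, hzp⟩ := exists_mem_frontier_of_mem_frontier_biUnion
    (ball_mem_nhds z (half_pos hε)) hfin hz
  exact mem_iUnion₂.2 ⟨p, hp, frontier_closure_subset hzp, hzD⟩

theorem frontier_length_bound_general (n j : ℕ) (S : Set (ℕ × ℕ))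
    (hsum : ∑' p : S, ENNReal.ofReal ((2:ℝ) ^ (-(p.1.1:ℤ)))
      ≤ ENNReal.ofReal ((2:ℝ) ^ (-(n:ℤ)) / 2)) :
    (μH[1] : Measure ℂ)
        (frontier (dyadicSquare n j \ ⋃ p ∈ S, closure (dyadicSquare p.1 p.2)) ∩ unitDisk)
      ≤ ENNReal.ofReal (17 * (2:ℝ) ^ (-(n:ℤ))) := by
  set ℓ : ℝ := (2:ℝ) ^ (-(n:ℤ))
  set C := ENNReal.ofReal (2 + 2 * Real.pi)
  have hsplit : frontier (dyadicSquare n j \ ⋃ p ∈ S, closure (dyadicSquare p.1 p.2)) ∩ unitDisk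
      ⊆ (frontier (dyadicSquare n j) ∩ unitDisk) ∪
        ⋃ p ∈ S, frontier (dyadicSquare p.1 p.2) ∩ unitDisk := by
    rintro z ⟨hz, hzD⟩
    refine (frontier_diff_subset _ _ hz).imp (fun hzQ => ⟨hzQ, hzD⟩) fun hzU => ?_
    exact frontier_biUnion_closure_dyadicSquare_inter_unitDisk_subset
      (ne_top_of_le_ne_top ENNReal.ofReal_ne_top hsum) ⟨hzU, hzD⟩
  calc _ ≤ μH[1] (frontier (dyadicSquare n j) ∩ unitDisk) +
          ∑' p : S, μH[1] (frontier (dyadicSquare p.1.1 p.1.2) ∩ unitDisk) :=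
        (measure_mono hsplit).trans <| (measure_union_le _ _).trans <|
          add_le_add_right (measure_biUnion_le _ S.to_countable _) _
    _ ≤ C * ENNReal.ofReal ℓ + ∑' p : S, C * ENNReal.ofReal ((2:ℝ) ^ (-(p.1.1:ℤ))) := by
        gcongr <;> exact hausdorffMeasure_frontier_dyadicSquare_inter_unitDisk_le _ _
    _ ≤ C * ENNReal.ofReal ℓ + C * ENNReal.ofReal (ℓ / 2) := by
        rw [ENNReal.tsum_mul_left]
        gcongr
    _ ≤ ENNReal.ofReal (17 * ℓ) := by
        have hℓ : 0 < ℓ := by positivity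
        rw [← ENNReal.ofReal_mul (by positivity), ← ENNReal.ofReal_mul (by positivity),
          ← ENNReal.ofReal_add (by positivity) (by positivity)]
        exact ENNReal.ofReal_le_ofReal (by nlinarith [Real.pi_le_four])

/-- Let `Q` be a dyadic Carleson square and `{Q_p}_{p ∈ S}` pairwise disjoint dyadic
Carleson squares contained in `Q` with `Σ ℓ(Q_p) ≤ ℓ(Q)/2`. If
`R = Q ∖ ⋃ closure(Q_p)`, then the arclength of `∂R ∩ 𝔻` is at most `17 ℓ(Q)`. -/
theorem frontier_length_bound (n j : ℕ) (hn : 1 ≤ n) (hj : j < 2 ^ n)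
    (S : Set (ℕ × ℕ)) (hvalid : ∀ p ∈ S, 1 ≤ p.1 ∧ p.2 < 2 ^ p.1)
    (hsub : ∀ p ∈ S, dyadicSquare p.1 p.2 ⊆ dyadicSquare n j)
    (hdisj : S.Pairwise fun p q => Disjoint (dyadicSquare p.1 p.2) (dyadicSquare q.1 q.2))
    (hsum : ∑' p : S, ENNReal.ofReal ((2:ℝ) ^ (-(p.1.1:ℤ)))
      ≤ ENNReal.ofReal ((2:ℝ) ^ (-(n:ℤ)) / 2)) :
    (μH[1] : Measure ℂ)
        (frontier (dyadicSquare n j \ ⋃ p ∈ S, closure (dyadicSquare p.1 p.2)) ∩ unitDisk)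
      ≤ ENNReal.ofReal (17 * (2:ℝ) ^ (-(n:ℤ))) :=
  frontier_length_bound_general n j S hsum
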